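/- arXiv:2402.17462 — 2 statements merged into one kernel-verified Lean document; each statement's English description precedes it below -/
import Mathlib

section
/- Let Ē[Z] = sup_{P∈𝒫} E_P[Z] and C̄(X,Y) = sup_{P∈conv(𝒫)} Cov_P(X,Y). Set ρ_X = (sup_P E_P[X] + inf_P E_P[X])/2, Δ_X = sup_P E_P[X] − inf_P E_P[X], and similarly ρ_Y, Δ_Y. Then Ē[(X−ρ_X)(Y−ρ_Y)] − (1/4)Δ_XΔ_Y ≤ C̄(X,Y) ≤ Ē[(X−ρ_X)(Y−ρ_Y)] + (1/4)Δ_XΔ_Y. -/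
/-!
For `Q ∈ conv(𝒫)`, `Cov_Q(X,Y) = E_Q[(X-ρ_X)(Y-ρ_Y)] - (E_Q[X]-ρ_X)(E_Q[Y]-ρ_Y)`. As `Q ↦ E_Q` is
affine, `E_Q[X]` lies in `[inf_𝒫 E_P[X], sup_𝒫 E_P[X]]`, an interval of midpoint `ρ_X` and length
`Δ_X`, and likewise for `Y`; so the correction term is at most `Δ_X Δ_Y / 4` in absolute value.
Affinity also gives `E_Q[(X-ρ_X)(Y-ρ_Y)] ≤ Ē[(X-ρ_X)(Y-ρ_Y)]`, whence the upper bound; the lower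
bound comes from taking `Q = P ∈ 𝒫`.
-/

open MeasureTheory ENNReal

variable {Ω : Type*} [MeasurableSpace Ω]

/-- Classical covariance of `X` and `Y` under `P`. -/
noncomputable def covP (P : Measure Ω) (X Y : Ω → ℝ) : ℝ :=
  (∫ ω, X ω * Y ω ∂P) - (∫ ω, X ω ∂P) * (∫ ω, Y ω ∂P)

/-- Classical variance of `X` under `P`. -/
noncomputable def varP (P : Measure Ω) (X : Ω → ℝ) : ℝ :=
  (∫ ω, (X ω) ^ 2 ∂P) - (∫ ω, X ω ∂P) ^ 2

/-- The convex hull of a set of measures: all finite convex combinations. -/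
def convHullP (S : Set (Measure Ω)) : Set (Measure Ω) :=
  { Q | ∃ (n : ℕ) (w : Fin n → ℝ≥0∞) (P : Fin n → Measure Ω),
      (∑ i, w i = 1) ∧ (∀ i, P i ∈ S) ∧ Q = ∑ i, w i • P i }

lemma abs_sub_midpoint_le {x lo hi : ℝ} (hx : x ∈ Set.Icc lo hi) :
    |x - (hi + lo) / 2| ≤ (hi - lo) / 2 := by
  rw [abs_le]; constructor <;> linarith [hx.1, hx.2]

lemma abs_sub_midpoint_mul_le {x y a b c d : ℝ} (hx : x ∈ Set.Icc a b) (hy : y ∈ Set.Icc c d) :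
    |(x - (b + a) / 2) * (y - (d + c) / 2)| ≤ 1 / 4 * (b - a) * (d - c) := by
  calc |(x - (b + a) / 2) * (y - (d + c) / 2)|
      = |x - (b + a) / 2| * |y - (d + c) / 2| := abs_mul _ _
    _ ≤ (b - a) / 2 * ((d - c) / 2) :=
        mul_le_mul (abs_sub_midpoint_le hx) (abs_sub_midpoint_le hy) (abs_nonneg _)
          ((abs_nonneg _).trans (abs_sub_midpoint_le hx))
    _ = 1 / 4 * (b - a) * (d - c) := by ring

lemma integrable_sub_mul_sub {P : Measure Ω} [IsFiniteMeasure P] {X Y : Ω → ℝ}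
    (hX : MemLp X 2 P) (hY : MemLp Y 2 P) (a b : ℝ) :
    Integrable (fun ω => (X ω - a) * (Y ω - b)) P :=
  (hX.sub (memLp_const a)).integrable_mul (hY.sub (memLp_const b))

section Covariance

variable {P : Measure Ω} [IsProbabilityMeasure P] {X Y : Ω → ℝ}

lemma covP_eq_integral_sub_mul_sub (hX : Integrable X P) (hY : Integrable Y P)
    (hXY : Integrable (fun ω => X ω * Y ω) P) (a b : ℝ) :
    covP P X Y = ∫ ω, (X ω - a) * (Y ω - b) ∂P - ((∫ ω, X ω ∂P) - a) * ((∫ ω, Y ω ∂P) - b) := by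
  have hXY_bX : Integrable (fun ω => X ω * Y ω - b * X ω) P := hXY.sub (hX.const_mul b)
  have hXY_bX_aY : Integrable (fun ω => X ω * Y ω - b * X ω - a * Y ω) P :=
    hXY_bX.sub (hY.const_mul a)
  have hexpand : (fun ω => (X ω - a) * (Y ω - b))
      = fun ω => X ω * Y ω - b * X ω - a * Y ω + a * b := by
    funext ω; ring
  rw [hexpand, integral_add hXY_bX_aY (integrable_const _), integral_sub hXY_bX (hY.const_mul a),
    integral_sub hXY (hX.const_mul b), integral_const_mul, integral_const_mul, integral_const]
  simp only [covP, probReal_univ, smul_eq_mul, one_mul]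
  ring

lemma abs_covP_sub_integral_le (hX : Integrable X P) (hY : Integrable Y P)
    (hXY : Integrable (fun ω => X ω * Y ω) P) {a b c d : ℝ}
    (hmX : ∫ ω, X ω ∂P ∈ Set.Icc a b) (hmY : ∫ ω, Y ω ∂P ∈ Set.Icc c d) :
    |covP P X Y - ∫ ω, (X ω - (b + a) / 2) * (Y ω - (d + c) / 2) ∂P|
      ≤ 1 / 4 * (b - a) * (d - c) := by
  rw [covP_eq_integral_sub_mul_sub hX hY hXY, sub_sub_cancel_left, abs_neg]
  exact abs_sub_midpoint_mul_le hmX hmY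

lemma abs_integral_le_one_add_integral_sq (hX : MemLp X 2 P) :
    |∫ ω, X ω ∂P| ≤ 1 + ∫ ω, X ω ^ 2 ∂P := by
  calc |∫ ω, X ω ∂P| ≤ ∫ ω, |X ω| ∂P := abs_integral_le_integral_abs
    _ ≤ ∫ ω, 1 + X ω ^ 2 ∂P := by
        refine integral_mono (hX.integrable one_le_two).abs
          ((integrable_const _).add hX.integrable_sq) fun ω => ?_
        nlinarith [sq_abs (X ω), sq_nonneg (|X ω| - 1)]
    _ = 1 + ∫ ω, X ω ^ 2 ∂P := by
        rw [integral_add (integrable_const _) hX.integrable_sq, integral_const]; simp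

lemma integral_sub_mul_sub_le (hX : MemLp X 2 P) (hY : MemLp Y 2 P) (a b : ℝ) :
    ∫ ω, (X ω - a) * (Y ω - b) ∂P ≤ (∫ ω, X ω ^ 2 ∂P) + (∫ ω, Y ω ^ 2 ∂P) + a ^ 2 + b ^ 2 := by
  calc ∫ ω, (X ω - a) * (Y ω - b) ∂P ≤ ∫ ω, X ω ^ 2 + Y ω ^ 2 + (a ^ 2 + b ^ 2) ∂P := by
        refine integral_mono (integrable_sub_mul_sub hX hY a b)
          ((hX.integrable_sq.add hY.integrable_sq).add (integrable_const _)) fun ω => ?_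
        nlinarith [sq_nonneg (X ω - a - (Y ω - b)), sq_nonneg (X ω + a), sq_nonneg (Y ω + b)]
    _ = (∫ ω, X ω ^ 2 ∂P) + (∫ ω, Y ω ^ 2 ∂P) + a ^ 2 + b ^ 2 := by
        have hsum : Integrable (fun ω => X ω ^ 2 + Y ω ^ 2) P :=
          hX.integrable_sq.add hY.integrable_sq
        rw [integral_add hsum (integrable_const _), integral_add hX.integrable_sq hY.integrable_sq,
          integral_const]
        simp only [probReal_univ, smul_eq_mul, one_mul]
        ring

end Covariance

section ConvexHull

variable {S : Set (Measure Ω)}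

lemma subset_convHullP : S ⊆ convHullP S := fun P hP =>
  ⟨1, fun _ => 1, fun _ => P, by simp, fun _ => hP, by simp⟩

lemma isProbabilityMeasure_of_mem_convHullP (hprob : ∀ P ∈ S, IsProbabilityMeasure P)
    {Q : Measure Ω} (hQ : Q ∈ convHullP S) : IsProbabilityMeasure Q := by
  obtain ⟨n, w, P, hw, hPS, rfl⟩ := hQ
  constructor
  have : ∀ i, (P i) Set.univ = 1 := fun i => (hprob _ (hPS i)).measure_univ
  simp [Measure.finsetSum_apply, this, hw]

lemma integrable_of_mem_convHullP {f : Ω → ℝ} (hf : ∀ P ∈ S, Integrable f P)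
    {Q : Measure Ω} (hQ : Q ∈ convHullP S) : Integrable f Q := by
  obtain ⟨n, w, P, hw, hPS, rfl⟩ := hQ
  refine integrable_finsetSum_measure.2 fun i _ => (hf _ (hPS i)).smul_measure ?_
  exact ENNReal.sum_ne_top.1 (hw ▸ one_ne_top) i (Finset.mem_univ i)

lemma integral_le_of_mem_convHullP {f : Ω → ℝ} (hf : ∀ P ∈ S, Integrable f P) {c : ℝ}
    (hc : ∀ P ∈ S, ∫ ω, f ω ∂P ≤ c) {Q : Measure Ω} (hQ : Q ∈ convHullP S) :
    ∫ ω, f ω ∂Q ≤ c := by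
  obtain ⟨n, w, P, hw, hPS, rfl⟩ := hQ
  have hw_ne_top : ∀ i, w i ≠ ∞ := fun i =>
    ENNReal.sum_ne_top.1 (hw ▸ one_ne_top) i (Finset.mem_univ i)
  rw [integral_finsetSum_measure fun i _ => (hf _ (hPS i)).smul_measure (hw_ne_top i)]
  calc ∑ i, ∫ ω, f ω ∂(w i • P i) = ∑ i, (w i).toReal * ∫ ω, f ω ∂(P i) := by
        simp only [integral_smul_measure, smul_eq_mul]
    _ ≤ ∑ i, (w i).toReal * c :=
        Finset.sum_le_sum fun i _ => mul_le_mul_of_nonneg_left (hc _ (hPS i)) toReal_nonneg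
    _ = c := by
        rw [← Finset.sum_mul, ← ENNReal.toReal_sum fun i _ => hw_ne_top i, hw, toReal_one, one_mul]

lemma le_integral_of_mem_convHullP {f : Ω → ℝ} (hf : ∀ P ∈ S, Integrable f P) {c : ℝ}
    (hc : ∀ P ∈ S, c ≤ ∫ ω, f ω ∂P) {Q : Measure Ω} (hQ : Q ∈ convHullP S) :
    c ≤ ∫ ω, f ω ∂Q := by
  have := integral_le_of_mem_convHullP (f := fun ω => -f ω) (c := -c)
    (fun P hP => (hf P hP).neg) (fun P hP => by rw [integral_neg]; linarith [hc P hP]) hQ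
  rw [integral_neg] at this
  linarith

lemma integral_mem_Icc_of_mem_convHullP {f : Ω → ℝ} (hf : ∀ P ∈ S, Integrable f P)
    (hbdd : Bornology.IsBounded ((fun P => ∫ ω, f ω ∂P) '' S))
    {Q : Measure Ω} (hQ : Q ∈ convHullP S) :
    ∫ ω, f ω ∂Q ∈ Set.Icc (sInf ((fun P => ∫ ω, f ω ∂P) '' S))
      (sSup ((fun P => ∫ ω, f ω ∂P) '' S)) :=
  ⟨le_integral_of_mem_convHullP hf (fun P hP => csInf_le hbdd.bddBelow ⟨P, hP, rfl⟩) hQ,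
    integral_le_of_mem_convHullP hf (fun P hP => le_csSup hbdd.bddAbove ⟨P, hP, rfl⟩) hQ⟩

end ConvexHull

section Bounds

variable {S : Set (Measure Ω)} {X Y : Ω → ℝ}

lemma isBounded_integral_image (hprob : ∀ P ∈ S, IsProbabilityMeasure P)
    (hX : ∀ P ∈ S, MemLp X 2 P) {B : ℝ} (hB : ∀ P ∈ S, ∫ ω, X ω ^ 2 ∂P ≤ B) :
    Bornology.IsBounded ((fun P => ∫ ω, X ω ∂P) '' S) := by
  refine isBounded_iff_forall_norm_le.2 ⟨1 + B, ?_⟩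
  rintro _ ⟨P, hP, rfl⟩
  have := hprob P hP
  exact (abs_integral_le_one_add_integral_sq (hX P hP)).trans (by linarith [hB P hP])

lemma bddAbove_integral_sub_mul_sub_image (hprob : ∀ P ∈ S, IsProbabilityMeasure P)
    (hXY : ∀ P ∈ S, MemLp X 2 P ∧ MemLp Y 2 P)
    (hbdd : BddAbove ((fun P => (∫ ω, X ω ^ 2 ∂P) + ∫ ω, Y ω ^ 2 ∂P) '' S)) (a b : ℝ) :
    BddAbove ((fun P => ∫ ω, (X ω - a) * (Y ω - b) ∂P) '' S) := by
  obtain ⟨B, hB⟩ := hbdd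
  refine ⟨B + a ^ 2 + b ^ 2, ?_⟩
  rintro _ ⟨P, hP, rfl⟩
  have := hprob P hP
  linarith [integral_sub_mul_sub_le (hXY P hP).1 (hXY P hP).2 a b, hB ⟨P, hP, rfl⟩]

lemma abs_covP_sub_integral_le_of_mem_convHullP (hprob : ∀ P ∈ S, IsProbabilityMeasure P)
    (hXY : ∀ P ∈ S, MemLp X 2 P ∧ MemLp Y 2 P)
    (hbX : Bornology.IsBounded ((fun P => ∫ ω, X ω ∂P) '' S))
    (hbY : Bornology.IsBounded ((fun P => ∫ ω, Y ω ∂P) '' S))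
    {Q : Measure Ω} (hQ : Q ∈ convHullP S) :
    |covP Q X Y - ∫ ω, (X ω - (sSup ((fun P => ∫ ω, X ω ∂P) '' S)
        + sInf ((fun P => ∫ ω, X ω ∂P) '' S)) / 2)
        * (Y ω - (sSup ((fun P => ∫ ω, Y ω ∂P) '' S) + sInf ((fun P => ∫ ω, Y ω ∂P) '' S)) / 2) ∂Q|
      ≤ 1 / 4 * (sSup ((fun P => ∫ ω, X ω ∂P) '' S) - sInf ((fun P => ∫ ω, X ω ∂P) '' S))
        * (sSup ((fun P => ∫ ω, Y ω ∂P) '' S) - sInf ((fun P => ∫ ω, Y ω ∂P) '' S)) := by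
  have := isProbabilityMeasure_of_mem_convHullP hprob hQ
  have hX : ∀ P ∈ S, Integrable X P := fun P hP =>
    have := hprob P hP; (hXY P hP).1.integrable one_le_two
  have hY : ∀ P ∈ S, Integrable Y P := fun P hP =>
    have := hprob P hP; (hXY P hP).2.integrable one_le_two
  exact abs_covP_sub_integral_le (integrable_of_mem_convHullP hX hQ)
    (integrable_of_mem_convHullP hY hQ)
    (integrable_of_mem_convHullP (fun P hP => (hXY P hP).1.integrable_mul (hXY P hP).2) hQ)
    (integral_mem_Icc_of_mem_convHullP hX hbX hQ) (integral_mem_Icc_of_mem_convHullP hY hbY hQ)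

end Bounds

theorem stmt10 (S : Set (Measure Ω)) (hS : S.Nonempty)
    (hprob : ∀ P ∈ S, IsProbabilityMeasure P) (X Y : Ω → ℝ)
    (hXY : ∀ P ∈ S, MemLp X 2 P ∧ MemLp Y 2 P)
    (hbdd : BddAbove ((fun P => (∫ ω, (X ω) ^ 2 ∂P) + ∫ ω, (Y ω) ^ 2 ∂P) '' S))
    (ρX ρY ΔX ΔY : ℝ)
    (hρX : ρX = (sSup ((fun P => ∫ ω, X ω ∂P) '' S) + sInf ((fun P => ∫ ω, X ω ∂P) '' S)) / 2)
    (hρY : ρY = (sSup ((fun P => ∫ ω, Y ω ∂P) '' S) + sInf ((fun P => ∫ ω, Y ω ∂P) '' S)) / 2)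
    (hΔX : ΔX = sSup ((fun P => ∫ ω, X ω ∂P) '' S) - sInf ((fun P => ∫ ω, X ω ∂P) '' S))
    (hΔY : ΔY = sSup ((fun P => ∫ ω, Y ω ∂P) '' S) - sInf ((fun P => ∫ ω, Y ω ∂P) '' S)) :
    sSup ((fun P => ∫ ω, (X ω - ρX) * (Y ω - ρY) ∂P) '' S) - (1 / 4) * ΔX * ΔY ≤
      sSup ((fun P => covP P X Y) '' convHullP S) ∧
    sSup ((fun P => covP P X Y) '' convHullP S) ≤
      sSup ((fun P => ∫ ω, (X ω - ρX) * (Y ω - ρY) ∂P) '' S) + (1 / 4) * ΔX * ΔY := by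
  have hsq : ∃ B, ∀ P ∈ S, ∫ ω, X ω ^ 2 ∂P ≤ B ∧ ∫ ω, Y ω ^ 2 ∂P ≤ B := by
    obtain ⟨B, hB⟩ := hbdd
    refine ⟨B, fun P hP => ?_⟩
    have := hB ⟨P, hP, rfl⟩
    exact ⟨by linarith [(integral_nonneg fun ω => sq_nonneg (Y ω) : 0 ≤ ∫ ω, Y ω ^ 2 ∂P)],
      by linarith [(integral_nonneg fun ω => sq_nonneg (X ω) : 0 ≤ ∫ ω, X ω ^ 2 ∂P)]⟩
  obtain ⟨B, hB⟩ := hsq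
  have hcorr : ∀ Q ∈ convHullP S,
      |covP Q X Y - ∫ ω, (X ω - ρX) * (Y ω - ρY) ∂Q| ≤ 1 / 4 * ΔX * ΔY := fun Q hQ => by
    subst hρX hρY hΔX hΔY
    exact abs_covP_sub_integral_le_of_mem_convHullP hprob hXY
      (isBounded_integral_image hprob (fun P hP => (hXY P hP).1) fun P hP => (hB P hP).1)
      (isBounded_integral_image hprob (fun P hP => (hXY P hP).2) fun P hP => (hB P hP).2) hQ
  have hupper : ∀ Q ∈ convHullP S, covP Q X Y ≤
      sSup ((fun P => ∫ ω, (X ω - ρX) * (Y ω - ρY) ∂P) '' S) + 1 / 4 * ΔX * ΔY := fun Q hQ => by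
    have := integral_le_of_mem_convHullP
      (fun P hP => have := hprob P hP; integrable_sub_mul_sub (hXY P hP).1 (hXY P hP).2 ρX ρY)
      (fun P hP => le_csSup (bddAbove_integral_sub_mul_sub_image hprob hXY hbdd ρX ρY)
        ⟨P, hP, rfl⟩) hQ
    linarith [(abs_le.1 (hcorr Q hQ)).2]
  have hCbdd : BddAbove ((fun P => covP P X Y) '' convHullP S) :=
    ⟨_, by rintro _ ⟨Q, hQ, rfl⟩; exact hupper Q hQ⟩
  refine ⟨sub_le_iff_le_add.2 (csSup_le (hS.image _) ?_),
    csSup_le ((hS.mono subset_convHullP).image _) fun _ ⟨Q, hQ, hC⟩ => hC ▸ hupper Q hQ⟩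
  rintro _ ⟨P, hP, rfl⟩
  have := le_csSup hCbdd ⟨P, subset_convHullP hP, rfl⟩
  linarith [(abs_le.1 (hcorr P (subset_convHullP hP))).1]
end

section
/- Let 𝒫 = {P₁,…,P_K} be finitely many probability measures and X, Y random variables with finite second moments under each Pᵢ. Then the upper covariance C̄(X,Y) = sup_{P∈conv(𝒫)} Cov_P(X,Y) satisfies C̄(X,Y) = max over pairs 1 ≤ i < j ≤ K of C̄_{ij}(X,Y), where C̄_{ij}(X,Y) is the upper covariance computed over the two-element set {Pᵢ, Pⱼ}, i.e. sup over λ ∈ [0,1] of Cov_{λPᵢ+(1−λ)Pⱼ}(X,Y). (For K = 1 interpret the right side as Cov_{P₁}(X,Y).) -/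
open MeasureTheory ENNReal

variable {Ω : Type*} [MeasurableSpace Ω]

/-!
Give a mixture `∑ tᵢ Pᵢ` the weight vector `t` and write `aᵢ, bᵢ, κᵢ` for the moments
`E_{Pᵢ}[X], E_{Pᵢ}[Y], E_{Pᵢ}[XY]`. Its covariance is
`mixtureCov a b κ t = t ⬝ κ - (t ⬝ a) (t ⬝ b)`.
If `t` has at least three nonzero weights, some `u ≠ 0` supported on them has `∑ uᵢ = 0` and
`u ⬝ a = 0`. Along the line `t + r u` the product term is then affine in `r`, so the covariance is
affine there and can be pushed without decreasing it until a weight vanishes. Repeating this, every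
value on the simplex is dominated by one at a point with at most two nonzero weights, i.e. by a
two-point covariance.
-/

open Finset Function Set

section Simplex

variable {ι : Type*} [Fintype ι]

def mixtureCov (a b κ t : ι → ℝ) : ℝ := t ⬝ᵥ κ - (t ⬝ᵥ a) * (t ⬝ᵥ b)

variable {a b κ : ι → ℝ}

lemma mixtureCov_add_smul {t u : ι → ℝ} (hu : u ⬝ᵥ a = 0) (r : ℝ) :
    mixtureCov a b κ (t + r • u) =
      mixtureCov a b κ t + r * (u ⬝ᵥ κ - (t ⬝ᵥ a) * (u ⬝ᵥ b)) := by
  simp only [mixtureCov, add_dotProduct, smul_dotProduct, hu, smul_eq_mul]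
  ring

lemma mixtureCov_single_add_single [DecidableEq ι] (p q : ι) (s : ℝ) :
    mixtureCov a b κ (Pi.single p s + Pi.single q (1 - s)) =
      (s * κ p + (1 - s) * κ q) - (s * a p + (1 - s) * a q) * (s * b p + (1 - s) * b q) := by
  simp only [mixtureCov, add_dotProduct, single_dotProduct]

lemma exists_neg_of_sum_eq_zero {v : ι → ℝ} (hv : v ≠ 0) (hsum : ∑ i, v i = 0) :
    ∃ i, v i < 0 := by
  by_contra! hnonneg
  exact hv <| funext fun i => (sum_eq_zero_iff_of_nonneg fun j _ => hnonneg j).1 hsum i (mem_univ i)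

lemma exists_nonneg_add_smul_eq_zero {t v : ι → ℝ} (ht : 0 ≤ t) (hv : ∃ i, v i < 0) :
    ∃ r, 0 ≤ r ∧ 0 ≤ t + r • v ∧ ∃ i, v i < 0 ∧ t i + r * v i = 0 := by
  classical
  obtain ⟨i, hi, hmin⟩ := exists_min_image {j | v j < 0} (fun j => t j / -v j)
    (by simpa [Finset.Nonempty] using hv)
  have hvi : v i < 0 := by simpa using hi
  have hr : 0 ≤ t i / -v i := div_nonneg (ht i) (neg_nonneg.2 hvi.le)
  refine ⟨t i / -v i, hr, fun j => ?_, i, hvi, by field_simp [hvi.ne]; ring⟩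
  simp only [Pi.zero_apply, Pi.add_apply, Pi.smul_apply, smul_eq_mul]
  rcases le_or_gt 0 (v j) with hvj | hvj
  · exact add_nonneg (ht j) (mul_nonneg hr hvj)
  · have := hmin j (by simpa using hvj)
    rw [le_div_iff₀ (neg_pos.2 hvj)] at this
    linarith

lemma exists_ne_zero_sum_eq_zero_dotProduct_eq_zero (a : ι → ℝ) {S : Set ι} (hS : 2 < S.ncard) :
    ∃ u : ι → ℝ, u ≠ 0 ∧ ∑ i, u i = 0 ∧ u ⬝ᵥ a = 0 ∧ support u ⊆ S := by
  classical
  obtain ⟨i, j, k, hi, hj, hk, hij, hik, hjk⟩ := (two_lt_ncard_iff).1 hS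
  obtain ⟨x, y, z, hxz, hsum, hdot⟩ : ∃ x y z : ℝ,
      (x ≠ 0 ∨ z ≠ 0) ∧ x + y + z = 0 ∧ x * a i + y * a j + z * a k = 0 := by
    by_cases h : a i = a j
    · exact ⟨1, -1, 0, by norm_num, by norm_num, by rw [h]; ring⟩
    · exact ⟨a j - a k, a k - a i, a i - a j, Or.inr (sub_ne_zero.2 h), by ring, by ring⟩
  refine ⟨Pi.single i x + Pi.single j y + Pi.single k z, fun hu => ?_, ?_, ?_, fun c hc => ?_⟩
  · have hui := congrFun hu i
    have huk := congrFun hu k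
    simp [hij, hik, hik.symm, hjk.symm] at hui huk
    tauto
  · simpa [sum_add_distrib] using hsum
  · simpa [add_dotProduct, single_dotProduct] using hdot
  · by_contra hcS
    have : c ≠ i ∧ c ≠ j ∧ c ≠ k := by refine ⟨?_, ?_, ?_⟩ <;> rintro rfl <;> contradiction
    simp [this.1, this.2.1, this.2.2] at hc

lemma exists_support_ssubset_mixtureCov_le {t : ι → ℝ} (ht : 0 ≤ t)
    (h : 2 < (support t).ncard) :
    ∃ t', 0 ≤ t' ∧ ∑ i, t' i = ∑ i, t i ∧ support t' ⊂ support t ∧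
      mixtureCov a b κ t ≤ mixtureCov a b κ t' := by
  obtain ⟨u, hu0, husum, hua, husupp⟩ := exists_ne_zero_sum_eq_zero_dotProduct_eq_zero a h
  -- Along `u` the objective is affine, so one of `±u` does not decrease it.
  obtain ⟨v, hv0, hvsum, hva, hvsupp, hgain⟩ : ∃ v : ι → ℝ, v ≠ 0 ∧ ∑ i, v i = 0 ∧
      v ⬝ᵥ a = 0 ∧ support v ⊆ support t ∧ 0 ≤ v ⬝ᵥ κ - (t ⬝ᵥ a) * (v ⬝ᵥ b) := by
    rcases le_total 0 (u ⬝ᵥ κ - (t ⬝ᵥ a) * (u ⬝ᵥ b)) with hu | hu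
    · exact ⟨u, hu0, husum, hua, husupp, hu⟩
    · refine ⟨-u, neg_ne_zero.2 hu0, by simp [husum], by simp [hua], by simpa using husupp, ?_⟩
      simp only [neg_dotProduct]
      linarith
  obtain ⟨r, hr, hnonneg, i, hvi, hti⟩ :=
    exists_nonneg_add_smul_eq_zero ht (exists_neg_of_sum_eq_zero hv0 hvsum)
  have hsubset : support (t + r • v) ⊆ support t := fun c hc => by
    by_contra htc
    have hvc : v c = 0 := notMem_support.1 (fun hc' => htc (hvsupp hc'))
    simp_all
  refine ⟨t + r • v, hnonneg, ?_, ?_, ?_⟩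
  · simp [sum_add_distrib, ← mul_sum, hvsum]
  · refine (Set.ssubset_iff_of_subset hsubset).2 ⟨i, hvsupp hvi.ne, ?_⟩
    simpa using hti
  · rw [mixtureCov_add_smul hva]
    exact le_add_of_nonneg_right (mul_nonneg hr hgain)

lemma exists_ncard_support_le_two_mixtureCov_le {t : ι → ℝ} (ht : 0 ≤ t) :
    ∃ t', 0 ≤ t' ∧ ∑ i, t' i = ∑ i, t i ∧ (support t').ncard ≤ 2 ∧
      mixtureCov a b κ t ≤ mixtureCov a b κ t' := by
  induction hn : (support t).ncard using Nat.strong_induction_on generalizing t with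
  | _ n ih =>
    rcases le_or_gt n 2 with hle | hlt
    · exact ⟨t, ht, rfl, hn ▸ hle, le_rfl⟩
    obtain ⟨t', ht', hsum', hssub, hle'⟩ :=
      exists_support_ssubset_mixtureCov_le (a := a) (b := b) (κ := κ) ht (hn ▸ hlt)
    obtain ⟨t'', ht'', hsum'', hcard, hle''⟩ :=
      ih _ (hn ▸ ncard_lt_ncard hssub) ht' rfl
    exact ⟨t'', ht'', hsum''.trans hsum', hcard, hle'.trans hle''⟩

lemma exists_subset_pair_of_ncard_le_two {S : Set ι} (hS : S.Nonempty) (h : S.ncard ≤ 2) :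
    ∃ p q, S ⊆ {p, q} := by
  interval_cases hn : S.ncard
  · exact absurd ((ncard_eq_zero).1 hn) hS.ne_empty
  · obtain ⟨p, rfl⟩ := ncard_eq_one.1 hn
    exact ⟨p, p, by simp⟩
  · obtain ⟨p, q, -, rfl⟩ := ncard_eq_two.1 hn
    exact ⟨p, q, subset_rfl⟩

lemma exists_eq_single_add_single [DecidableEq ι] {t : ι → ℝ} (ht : 0 ≤ t) (hsum : ∑ i, t i = 1)
    (hcard : (support t).ncard ≤ 2) :
    ∃ p q, ∃ s ∈ Icc (0 : ℝ) 1, t = Pi.single p s + Pi.single q (1 - s) := by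
  have hne : (support t).Nonempty := support_nonempty_iff.2 fun h => by simp [h] at hsum
  obtain ⟨p, q, hpq⟩ := exists_subset_pair_of_ncard_le_two hne hcard
  have hzero : ∀ c, c ≠ p ∧ c ≠ q → t c = 0 := fun c hc =>
    notMem_support.1 fun hc' => by simpa [hc.1, hc.2] using hpq hc'
  rcases eq_or_ne p q with rfl | hpq'
  · have htp : t p = 1 := by rwa [Fintype.sum_eq_single p fun c hc => hzero c ⟨hc, hc⟩] at hsum
    refine ⟨p, p, 1, ⟨zero_le_one, le_rfl⟩, funext fun c => ?_⟩
    rcases eq_or_ne c p with rfl | hc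
    · simp [htp]
    · simp [hc, hzero c ⟨hc, hc⟩]
  · rw [Fintype.sum_eq_add p q hpq' hzero] at hsum
    refine ⟨p, q, t p, ⟨ht p, by linarith [show 0 ≤ t q from ht q]⟩, funext fun c => ?_⟩
    rcases eq_or_ne c p with rfl | hcp
    · simp [hpq']
    rcases eq_or_ne c q with rfl | hcq
    · rw [Pi.add_apply, Pi.single_eq_of_ne hcp, Pi.single_eq_same, zero_add]
      linarith
    · simp [hcp, hcq, hzero c ⟨hcp, hcq⟩]

lemma exists_mixtureCov_le_single_add_single [DecidableEq ι] {t : ι → ℝ} (ht : 0 ≤ t)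
    (hsum : ∑ i, t i = 1) :
    ∃ p q, ∃ s ∈ Icc (0 : ℝ) 1,
      mixtureCov a b κ t ≤ mixtureCov a b κ (Pi.single p s + Pi.single q (1 - s)) := by
  obtain ⟨t', ht', hsum', hcard, hle⟩ :=
    exists_ncard_support_le_two_mixtureCov_le (a := a) (b := b) (κ := κ) ht
  obtain ⟨p, q, s, hs, rfl⟩ := exists_eq_single_add_single ht' (hsum'.trans hsum) hcard
  exact ⟨p, q, s, hs, hle⟩

lemma continuous_mixtureCov_single_add_single [DecidableEq ι] (p q : ι) :
    Continuous fun s => mixtureCov a b κ (Pi.single p s + Pi.single q (1 - s)) := by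
  simp only [mixtureCov_single_add_single]
  fun_prop

end Simplex

section Mixture

variable {ι : Type*} [Fintype ι] {Q : ι → Measure Ω} {X Y : Ω → ℝ}

lemma integral_sum_smul_measure {w : ι → ℝ≥0∞} (hw : ∀ i, w i ≠ ∞) {f : Ω → ℝ}
    (hf : ∀ i, Integrable f (Q i)) :
    ∫ ω, f ω ∂(∑ i, w i • Q i) = (fun i => (w i).toReal) ⬝ᵥ fun i => ∫ ω, f ω ∂Q i := by
  rw [integral_finsetSum_measure fun i _ => (hf i).smul_measure (hw i)]
  exact sum_congr rfl fun i _ => integral_smul_measure f (w i)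

lemma integral_smul_add_smul_measure {μ ν : Measure Ω} {s : ℝ} (hs : s ∈ Icc (0 : ℝ) 1)
    {f : Ω → ℝ} (hμ : Integrable f μ) (hν : Integrable f ν) :
    ∫ ω, f ω ∂(ENNReal.ofReal s • μ + ENNReal.ofReal (1 - s) • ν) =
      s * ∫ ω, f ω ∂μ + (1 - s) * ∫ ω, f ω ∂ν := by
  rw [integral_add_measure (hμ.smul_measure ofReal_ne_top) (hν.smul_measure ofReal_ne_top),
    integral_smul_measure, integral_smul_measure, toReal_ofReal hs.1,
    toReal_ofReal (sub_nonneg.2 hs.2), smul_eq_mul, smul_eq_mul]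

variable (hX : ∀ i, Integrable X (Q i)) (hY : ∀ i, Integrable Y (Q i))
  (hXY : ∀ i, Integrable (fun ω => X ω * Y ω) (Q i))
include hX hY hXY

lemma covP_sum_smul {w : ι → ℝ≥0∞} (hw : ∀ i, w i ≠ ∞) :
    covP (∑ i, w i • Q i) X Y =
      mixtureCov (fun i => ∫ ω, X ω ∂Q i) (fun i => ∫ ω, Y ω ∂Q i)
        (fun i => ∫ ω, X ω * Y ω ∂Q i) fun i => (w i).toReal := by
  rw [covP, integral_sum_smul_measure hw hX, integral_sum_smul_measure hw hY,
    integral_sum_smul_measure hw hXY, mixtureCov]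

lemma covP_smul_add_smul [DecidableEq ι] (p q : ι) {s : ℝ} (hs : s ∈ Icc (0 : ℝ) 1) :
    covP (ENNReal.ofReal s • Q p + ENNReal.ofReal (1 - s) • Q q) X Y =
      mixtureCov (fun i => ∫ ω, X ω ∂Q i) (fun i => ∫ ω, Y ω ∂Q i)
        (fun i => ∫ ω, X ω * Y ω ∂Q i) (Pi.single p s + Pi.single q (1 - s)) := by
  rw [covP, integral_smul_add_smul_measure hs (hX p) (hX q),
    integral_smul_add_smul_measure hs (hY p) (hY q),
    integral_smul_add_smul_measure hs (hXY p) (hXY q), mixtureCov_single_add_single]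

lemma bddAbove_covP_smul_add_smul [DecidableEq ι] (p q : ι) :
    BddAbove ((fun s : ℝ =>
      covP (ENNReal.ofReal s • Q p + ENNReal.ofReal (1 - s) • Q q) X Y) '' Icc 0 1) := by
  rw [image_congr fun s hs => covP_smul_add_smul hX hY hXY p q hs]
  exact (isCompact_Icc.image (continuous_mixtureCov_single_add_single p q)).bddAbove

end Mixture

lemma smul_add_smul_mem_convHullP {ι : Type*} (P : ι → Measure Ω) (i j : ι) {s : ℝ}
    (hs : s ∈ Icc (0 : ℝ) 1) :
    ENNReal.ofReal s • P i + ENNReal.ofReal (1 - s) • P j ∈ convHullP (range P) := by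
  refine ⟨2, ![ENNReal.ofReal s, ENNReal.ofReal (1 - s)], ![P i, P j], ?_, ?_, ?_⟩
  · simp only [Fin.sum_univ_two, Matrix.cons_val_zero, Matrix.cons_val_one]
    rw [← ofReal_add hs.1 (sub_nonneg.2 hs.2), add_sub_cancel, ofReal_one]
  · intro m
    fin_cases m <;> simp
  · simp [Fin.sum_univ_two]

lemma exists_covP_le_of_mem_convHullP {ι : Type*} {P : ι → Measure Ω} {X Y : Ω → ℝ}
    (hX : ∀ i, Integrable X (P i)) (hY : ∀ i, Integrable Y (P i))
    (hXY : ∀ i, Integrable (fun ω => X ω * Y ω) (P i)) {Q : Measure Ω}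
    (hQ : Q ∈ convHullP (range P)) :
    ∃ i j, ∃ s ∈ Icc (0 : ℝ) 1,
      covP Q X Y ≤ covP (ENNReal.ofReal s • P i + ENNReal.ofReal (1 - s) • P j) X Y := by
  obtain ⟨n, w, Pm, hw, hPm, rfl⟩ := hQ
  choose g hg using hPm
  obtain rfl : Pm = P ∘ g := funext fun m => (hg m).symm
  have hX' : ∀ m, Integrable X ((P ∘ g) m) := fun m => hX (g m)
  have hY' : ∀ m, Integrable Y ((P ∘ g) m) := fun m => hY (g m)
  have hXY' : ∀ m, Integrable (fun ω => X ω * Y ω) ((P ∘ g) m) := fun m => hXY (g m)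
  have hw_ne_top : ∀ m, w m ≠ ∞ := fun m =>
    ne_top_of_le_ne_top one_ne_top (hw ▸ single_le_sum (fun _ _ => zero_le) (mem_univ m))
  have hsum : ∑ m, (w m).toReal = 1 := by
    rw [← toReal_sum fun m _ => hw_ne_top m, hw, toReal_one]
  obtain ⟨p, q, s, hs, hle⟩ := exists_mixtureCov_le_single_add_single
    (a := fun m => ∫ ω, X ω ∂(P ∘ g) m) (b := fun m => ∫ ω, Y ω ∂(P ∘ g) m)
    (κ := fun m => ∫ ω, X ω * Y ω ∂(P ∘ g) m) (fun m => toReal_nonneg) hsum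
  exact ⟨g p, g q, s, hs, (covP_sum_smul hX' hY' hXY' hw_ne_top).trans_le
    (hle.trans_eq (covP_smul_add_smul hX' hY' hXY' p q hs).symm)⟩

theorem stmt13 (K : ℕ) (hK : 1 ≤ K) (P : Fin K → Measure Ω)
    (hprob : ∀ i, IsProbabilityMeasure (P i)) (X Y : Ω → ℝ)
    (hXY : ∀ i, MemLp X 2 (P i) ∧ MemLp Y 2 (P i)) :
    sSup ((fun Q => covP Q X Y) '' convHullP (Set.range P)) =
      ⨆ i : Fin K, ⨆ j : Fin K,
        sSup ((fun t : ℝ =>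
          covP (ENNReal.ofReal t • P i + ENNReal.ofReal (1 - t) • P j) X Y) ''
            Set.Icc (0 : ℝ) 1) := by
  have hX : ∀ i, Integrable X (P i) := fun i => (hXY i).1.integrable one_le_two
  have hY : ∀ i, Integrable Y (P i) := fun i => (hXY i).2.integrable one_le_two
  have hXY' : ∀ i, Integrable (fun ω => X ω * Y ω) (P i) := fun i =>
    (hXY i).1.integrable_mul (hXY i).2
  set pairCovs := fun i j => (fun t : ℝ =>
    covP (ENNReal.ofReal t • P i + ENNReal.ofReal (1 - t) • P j) X Y) '' Icc (0 : ℝ) 1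
  set M := ⨆ i : Fin K, ⨆ j : Fin K, sSup (pairCovs i j)
  have hpair_le : ∀ i j, ∀ s ∈ Icc (0 : ℝ) 1,
      covP (ENNReal.ofReal s • P i + ENNReal.ofReal (1 - s) • P j) X Y ≤ M := fun i j s hs =>
    (le_csSup (bddAbove_covP_smul_add_smul hX hY hXY' i j) (mem_image_of_mem _ hs)).trans <|
      (le_ciSup (f := fun j => sSup (pairCovs i j)) (finite_range _).bddAbove j).trans
        (le_ciSup (f := fun i => ⨆ j, sSup (pairCovs i j)) (finite_range _).bddAbove i)
  have hhull_le : ∀ Q ∈ convHullP (range P), covP Q X Y ≤ M := fun Q hQ => by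
    obtain ⟨i, j, s, hs, hle⟩ := exists_covP_le_of_mem_convHullP hX hY hXY' hQ
    exact hle.trans (hpair_le i j s hs)
  have : Nonempty (Fin K) := ⟨⟨0, hK⟩⟩
  refine le_antisymm (csSup_le ?_ (forall_mem_image.2 hhull_le)) ?_
  · exact ⟨_, mem_image_of_mem _ (smul_add_smul_mem_convHullP P ⟨0, hK⟩ ⟨0, hK⟩
      (left_mem_Icc.2 zero_le_one))⟩
  refine ciSup_le fun i => ciSup_le fun j =>
    csSup_le ((Set.nonempty_Icc.2 zero_le_one).image _) (forall_mem_image.2 fun s hs => ?_)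
  exact le_csSup ⟨M, forall_mem_image.2 hhull_le⟩
    (mem_image_of_mem _ (smul_add_smul_mem_convHullP P i j hs))
end
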